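/- arXiv:2003.03011 — 4 statements merged into one kernel-verified Lean document; each statement's English description precedes it below -/
import Mathlib

section
/- Let Ωₙ be the 2ⁿ×2ⁿ diagonal matrix with entries Ωₙ(j,j) = ω_{2^{n+1}}^j for j = 0,…,2ⁿ−1, where ω_{2^{n+1}} = exp(−2πi/2^{n+1}). Then Ωₙ = R₂ ⊗ R₃ ⊗ ⋯ ⊗ R_{n+1}, where Rₖ = diag(1, exp(−2πi/2ᵏ)). -/
open Matrix Complex BigOperators

noncomputable section

/-- The root of unity `ω_N = exp(-2πi/N)`. -/
def qomega (N : ℕ) : ℂ := Complex.exp (-(2 * Real.pi * Complex.I) / N)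

/-- The `N × N` DFT matrix with entries `(1/√N) ω_N^{jk}`. -/
def dftM (N : ℕ) : Matrix (Fin N) (Fin N) ℂ :=
  fun j k => ((1 / Real.sqrt N : ℝ) : ℂ) * qomega N ^ ((j : ℕ) * (k : ℕ))

/-- Kronecker product of `Fin`-indexed matrices, big-endian convention. -/
def kron {a b c d : ℕ} (A : Matrix (Fin a) (Fin b) ℂ) (B : Matrix (Fin c) (Fin d) ℂ) :
    Matrix (Fin (a * c)) (Fin (b * d)) ℂ :=
  fun i j => A i.divNat j.divNat * B i.modNat j.modNat

/-- Recast a square matrix along an equality of dimensions. -/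
def castM {a b : ℕ} (h : a = b) (A : Matrix (Fin a) (Fin a) ℂ) : Matrix (Fin b) (Fin b) ℂ :=
  A.submatrix (Fin.cast h.symm) (Fin.cast h.symm)

/-- Direct sum `A ⊕ B` of two `n × n` matrices. -/
def dsum {n : ℕ} (A B : Matrix (Fin n) (Fin n) ℂ) : Matrix (Fin (2 * n)) (Fin (2 * n)) ℂ :=
  fun i j =>
    if h1 : (i : ℕ) < n then
      if h2 : (j : ℕ) < n then A ⟨i, h1⟩ ⟨j, h2⟩ else 0
    else
      if _h2 : (j : ℕ) < n then 0
      else B ⟨(i : ℕ) - n, by have := i.isLt; omega⟩ ⟨(j : ℕ) - n, by have := j.isLt; omega⟩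

/-- `E₁ = e₁ e₁ᵀ`. -/
def E1 : Matrix (Fin 2) (Fin 2) ℂ := !![1, 0; 0, 0]

/-- `E₂ = e₂ e₂ᵀ`. -/
def E2 : Matrix (Fin 2) (Fin 2) ℂ := !![0, 0; 0, 1]

/-- The Hadamard matrix. -/
def Hm : Matrix (Fin 2) (Fin 2) ℂ := ((1 / Real.sqrt 2 : ℝ) : ℂ) • !![1, 1; 1, -1]

/-- `R_n = diag(1, ω_{2^n})`. -/
def Rm (n : ℕ) : Matrix (Fin 2) (Fin 2) ℂ :=
  Matrix.diagonal (fun k : Fin 2 => qomega (2 ^ n) ^ (k : ℕ))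

/-- `Ω_n = diag(ω_{2^{n+1}}^j)_{j=0}^{2^n - 1}`. -/
def OmegaM (n : ℕ) : Matrix (Fin (2 ^ n)) (Fin (2 ^ n)) ℂ :=
  Matrix.diagonal (fun j : Fin (2 ^ n) => qomega (2 ^ (n + 1)) ^ (j : ℕ))

/-- Bit reversal of the `n` low binary digits of `j` (big-endian reversal). -/
def bitRevNat (n j : ℕ) : ℕ := ∑ r ∈ Finset.range n, ((j / 2 ^ r) % 2) * 2 ^ (n - 1 - r)

/-- The bit-reversal permutation matrix `P_n` on `ℂ^{2^n}`:
it maps the basis vector indexed by `j` to the one indexed by the bit reversal of `j`. -/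
def Pm (n : ℕ) : Matrix (Fin (2 ^ n)) (Fin (2 ^ n)) ℂ :=
  fun i j => if (i : ℕ) = bitRevNat n (j : ℕ) then 1 else 0

/-- Kronecker product of vectors, big-endian convention. -/
def vkron {a b : ℕ} (u : Fin a → ℂ) (v : Fin b → ℂ) : Fin (a * b) → ℂ :=
  fun i => u i.divNat * v i.modNat

/-- Iterated Kronecker product `x₁ ⊗ x₂ ⊗ ⋯ ⊗ xₙ` of vectors in `ℂ²`. -/
def tkron : (n : ℕ) → (Fin n → Fin 2 → ℂ) → Fin (2 ^ n) → ℂ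
  | 0, _ => fun _ => 1
  | n + 1, v => fun i =>
      vkron (v 0) (tkron n (fun j => v j.succ)) (Fin.cast (by rw [pow_succ]; ring) i)

lemma two_mul_pow (n : ℕ) : 2 * 2 ^ n = 2 ^ (n + 1) := by rw [pow_succ]; ring


/-- Iterated Kronecker product of a family of `2 × 2` matrices, big-endian. -/
def kron2List : (n : ℕ) → (Fin n → Matrix (Fin 2) (Fin 2) ℂ) → Matrix (Fin (2 ^ n)) (Fin (2 ^ n)) ℂ
  | 0, _ => 1
  | n + 1, M => castM (two_mul_pow n) (kron (M 0) (kron2List n (fun i => M i.succ)))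

lemma qomega_pow_pow (a b : ℕ) : qomega (2 ^ (a + b)) ^ (2 ^ a : ℕ) = qomega (2 ^ b) := by
  unfold qomega
  rw [← Complex.exp_nat_mul]
  congr 1
  have h1 : ((2 : ℕ) ^ (a + b) : ℂ) ≠ 0 := by
    exact_mod_cast pow_ne_zero _ (by norm_num : (2 : ℂ) ≠ 0)
  have h2 : ((2 : ℕ) ^ b : ℂ) ≠ 0 := by
    exact_mod_cast pow_ne_zero _ (by norm_num : (2 : ℂ) ≠ 0)
  field_simp
  push_cast [pow_add]
  ring

lemma kron2List_R_key : ∀ n N : ℕ,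
    kron2List n (fun i : Fin n => Rm ((i : ℕ) + 2 + N)) =
      Matrix.diagonal (fun j : Fin (2 ^ n) => qomega (2 ^ (n + 1 + N)) ^ (j : ℕ)) := by
  intro n
  induction n with
  | zero =>
    intro N
    have : ∀ j : Fin (2 ^ 0), (j : ℕ) = 0 := by
      intro j; omega
    simp [kron2List, this, Matrix.diagonal_one]
  | succ n ih =>
    intro N
    show castM (two_mul_pow n)
        (kron (Rm ((0 : Fin (n+1)) + 2 + N))
          (kron2List n (fun i => Rm (((Fin.succ i : Fin (n+1)) : ℕ) + 2 + N)))) = _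
    have htail : (fun i : Fin n => Rm (((Fin.succ i : Fin (n+1)) : ℕ) + 2 + N)) =
        fun i : Fin n => Rm ((i : ℕ) + 2 + (N + 1)) := by
      funext i; simp only [Fin.val_succ]; ring_nf
    rw [htail, ih (N + 1)]
    funext i j
    show (Rm (((0 : Fin (n+1)) : ℕ) + 2 + N))
        (Fin.divNat (Fin.cast (two_mul_pow n).symm i)) (Fin.divNat (Fin.cast (two_mul_pow n).symm j)) *
        (Matrix.diagonal (fun k : Fin (2 ^ n) => qomega (2 ^ (n + 1 + (N + 1))) ^ (k : ℕ)))
        (Fin.modNat (Fin.cast (two_mul_pow n).symm i)) (Fin.modNat (Fin.cast (two_mul_pow n).symm j)) =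
        Matrix.diagonal (fun k : Fin (2 ^ (n+1)) => qomega (2 ^ (n + 1 + 1 + N)) ^ (k : ℕ)) i j
    have hhead : (((0 : Fin (n+1)) : ℕ) + 2 + N) = 2 + N := by simp
    rw [hhead]
    unfold Rm
    set i' := Fin.cast (two_mul_pow n).symm i with hi'
    set j' := Fin.cast (two_mul_pow n).symm j with hj'
    have hvi : (i' : ℕ) = (i : ℕ) := rfl
    have hvj : (j' : ℕ) = (j : ℕ) := rfl
    have hdi : ((Fin.divNat i' : Fin 2) : ℕ) = (i : ℕ) / 2 ^ n := rfl
    have hdj : ((Fin.divNat j' : Fin 2) : ℕ) = (j : ℕ) / 2 ^ n := rfl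
    have hmi : ((Fin.modNat i' : Fin (2 ^ n)) : ℕ) = (i : ℕ) % 2 ^ n := rfl
    have hmj : ((Fin.modNat j' : Fin (2 ^ n)) : ℕ) = (j : ℕ) % 2 ^ n := rfl
    by_cases hij : i = j
    · subst hij
      rw [Matrix.diagonal_apply_eq, Matrix.diagonal_apply_eq, Matrix.diagonal_apply_eq]
      rw [hdi, hmi]
      have he1 : n + 1 + (N + 1) = n + (2 + N) := by ring
      have he2 : n + 1 + 1 + N = n + (2 + N) := by ring
      rw [he1, he2, ← qomega_pow_pow n (2 + N), ← pow_mul, ← pow_add]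
      congr 1
      have := Nat.div_add_mod (i : ℕ) (2 ^ n)
      omega
    · rw [Matrix.diagonal_apply_ne _ hij]
      by_cases hd : (Fin.divNat i' : Fin 2) = Fin.divNat j'
      · have hm : (Fin.modNat i' : Fin (2 ^ n)) ≠ Fin.modNat j' := by
          intro hm
          apply hij
          have h1 : (i : ℕ) / 2 ^ n = (j : ℕ) / 2 ^ n := by
            rw [← hdi, ← hdj, hd]
          have h2 : (i : ℕ) % 2 ^ n = (j : ℕ) % 2 ^ n := by
            rw [← hmi, ← hmj, hm]
          refine Fin.ext ?_
          rw [← Nat.div_add_mod (i : ℕ) (2 ^ n), ← Nat.div_add_mod (j : ℕ) (2 ^ n), h1, h2]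
        rw [Matrix.diagonal_apply_ne _ hm, mul_zero]
      · rw [Matrix.diagonal_apply_ne _ hd, zero_mul]

theorem OmegaM_eq_kron_of_R (n : ℕ) :
    OmegaM n = kron2List n (fun i => Rm ((i : ℕ) + 2)) := by
  have h := kron2List_R_key n 0
  simp only [add_zero] at h
  rw [h]
  rfl

end
end

section
/- The diagonal matrix I_{2^k} ⊕ Ω_k ∈ ℂ^{2^{k+1}×2^{k+1}} admits the factorization I_{2^k} ⊕ Ω_k = ∏_{i=1}^{k} [E₁ ⊗ I_{2^{i−1}} ⊗ I₂ ⊗ I_{2^{k−i}} + E₂ ⊗ I_{2^{i−1}} ⊗ R_{i+1} ⊗ I_{2^{k−i}}]. -/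
open Matrix Complex BigOperators

noncomputable section

lemma pf1 {i k : ℕ} (h : i < k) : 2 * (2 ^ i * (2 * 2 ^ (k - 1 - i))) = 2 ^ (k + 1) :=
  calc 2 * (2 ^ i * (2 * 2 ^ (k - 1 - i)))
      = 2 ^ (1 + (i + (1 + (k - 1 - i)))) := by rw [pow_add, pow_add, pow_add, pow_one]
    _ = 2 ^ (k + 1) := by congr 1; omega



namespace DiagFact

open Matrix

/-- diagonal function of E1 -/
def e1d : Fin 2 → ℂ := ![1, 0]
def e2d : Fin 2 → ℂ := ![0, 1]

lemma E1_diag : E1 = Matrix.diagonal e1d := by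
  ext i j; fin_cases i <;> fin_cases j <;> simp [E1, e1d, Matrix.diagonal]

lemma E2_diag : E2 = Matrix.diagonal e2d := by
  ext i j; fin_cases i <;> fin_cases j <;> simp [E2, e2d, Matrix.diagonal]

lemma fin_eq_of_div_mod {a c : ℕ} (i j : Fin (a * c)) (h1 : i.divNat = j.divNat)
    (h2 : i.modNat = j.modNat) : i = j := by
  have e1 : (i : ℕ) / c = (j : ℕ) / c := by
    rw [← Fin.coe_divNat, ← Fin.coe_divNat, h1]
  have e2 : (i : ℕ) % c = (j : ℕ) % c := by
    rw [← Fin.coe_modNat, ← Fin.coe_modNat, h2]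
  apply Fin.ext
  calc (i : ℕ) = c * ((i : ℕ) / c) + (i : ℕ) % c := (Nat.div_add_mod _ _).symm
    _ = c * ((j : ℕ) / c) + (j : ℕ) % c := by rw [e1, e2]
    _ = (j : ℕ) := Nat.div_add_mod _ _

lemma kron_diagonal {a c : ℕ} (f : Fin a → ℂ) (g : Fin c → ℂ) :
    kron (Matrix.diagonal f) (Matrix.diagonal g)
      = Matrix.diagonal (fun i : Fin (a * c) => f i.divNat * g i.modNat) := by
  ext i j
  by_cases h : i = j
  · subst h; simp [kron, Matrix.diagonal]
  · have h' : i.divNat ≠ j.divNat ∨ i.modNat ≠ j.modNat := by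
      by_contra hc
      push_neg at hc
      exact h (fin_eq_of_div_mod i j hc.1 hc.2)
    rw [Matrix.diagonal_apply_ne _ h]
    rcases h' with h' | h' <;>
      simp [kron, Matrix.diagonal_apply_ne _ h']

lemma castM_diagonal {a b : ℕ} (h : a = b) (f : Fin a → ℂ) :
    castM h (Matrix.diagonal f)
      = Matrix.diagonal (fun j : Fin b => f (Fin.cast h.symm j)) := by
  ext i j
  by_cases hij : i = j
  · subst hij; simp [castM, Matrix.diagonal]
  · have : Fin.cast h.symm i ≠ Fin.cast h.symm j := by
      intro hc
      apply hij
      apply Fin.ext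
      have hv : ((Fin.cast h.symm i : Fin a) : ℕ) = ((Fin.cast h.symm j : Fin a) : ℕ) :=
        congrArg Fin.val hc
      simpa using hv
    simp [castM, Matrix.diagonal_apply_ne _ this, Matrix.diagonal_apply_ne _ hij]

lemma dsum_diagonal {n : ℕ} (f g : Fin n → ℂ) :
    dsum (Matrix.diagonal f) (Matrix.diagonal g)
      = Matrix.diagonal (fun j : Fin (2 * n) =>
          if h : (j : ℕ) < n then f ⟨j, h⟩
          else g ⟨(j : ℕ) - n, by have := j.isLt; omega⟩) := by
  ext i j
  by_cases hij : i = j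
  · subst hij
    by_cases h1 : (i : ℕ) < n <;> simp [dsum, Matrix.diagonal, h1]
  · have hv : (i : ℕ) ≠ (j : ℕ) := fun hc => hij (Fin.ext hc)
    rw [Matrix.diagonal_apply_ne _ hij]
    by_cases h1 : (i : ℕ) < n <;> by_cases h2 : (j : ℕ) < n <;>
      simp [dsum, h1, h2]
    · exact Matrix.diagonal_apply_ne _ (by intro hc; exact hv (by
        have := congrArg Fin.val hc; simpa using this))
    · apply Matrix.diagonal_apply_ne
      intro hc
      have := congrArg Fin.val hc
      simp at this
      have := i.isLt; omega

lemma listprod_diagonal {m : ℕ} {α : Type*} (l : List α) (F : α → Fin m → ℂ) :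
    (l.map (fun a => Matrix.diagonal (F a))).prod
      = Matrix.diagonal (fun j => (l.map (fun a => F a j)).prod) := by
  induction l with
  | nil => simp [Matrix.diagonal_one]
  | cons a l ih =>
      simp only [List.map_cons, List.prod_cons, ih, Matrix.diagonal_mul_diagonal]

lemma qomega_pow (a b : ℕ) : qomega (2 ^ (a + b)) ^ (2 ^ a) = qomega (2 ^ b) := by
  rw [qomega, qomega, ← Complex.exp_nat_mul]
  congr 1
  have h1 : ((2 : ℂ) ^ (a + b)) ≠ 0 := pow_ne_zero _ two_ne_zero
  have h2 : ((2 : ℂ) ^ b) ≠ 0 := pow_ne_zero _ two_ne_zero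
  push_cast
  field_simp
  ring

lemma digitsum : ∀ (n m : ℕ), m < 2 ^ n →
    ∑ r ∈ Finset.range n, 2 ^ r * (m / 2 ^ r % 2) = m := by
  intro n
  induction n with
  | zero => intro m hm; interval_cases m <;> simp
  | succ n ih =>
      intro m hm
      rw [Finset.sum_range_succ']
      have key : ∀ r ∈ Finset.range n, 2 ^ (r + 1) * (m / 2 ^ (r + 1) % 2)
          = 2 * (2 ^ r * ((m / 2) / 2 ^ r % 2)) := by
        intro r _
        have : m / 2 ^ (r + 1) = (m / 2) / 2 ^ r := by
          rw [Nat.div_div_eq_div_mul, pow_succ, mul_comm]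
        rw [this, pow_succ]; ring
      have hm2 : m / 2 < 2 ^ n := by
        have : m < 2 ^ n * 2 := by rw [← pow_succ]; exact hm
        omega
      rw [Finset.sum_congr rfl key, ← Finset.mul_sum, ih (m / 2) hm2]
      simp only [pow_zero, one_mul, Nat.pow_zero, Nat.div_one]
      omega

/-- diagonal function of the `i`-th factor. -/
def Ffun (k : ℕ) (i : Fin k) (j : Fin (2 * 2 ^ k)) : ℂ :=
  if (j : ℕ) < 2 ^ k then 1
  else qomega (2 ^ ((i : ℕ) + 2)) ^ ((j : ℕ) / 2 ^ (k - 1 - (i : ℕ)) % 2)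

lemma scalar_eq (k : ℕ) (i : Fin k) (j : Fin (2 * 2 ^ k))
    (j' : Fin (2 * (2 ^ (i : ℕ) * (2 * 2 ^ (k - 1 - (i : ℕ))))))
    (hjj : (j' : ℕ) = (j : ℕ)) :
    e1d j'.divNat * (1 * (1 * 1)) +
      e2d j'.divNat *
        (1 * (qomega (2 ^ ((i : ℕ) + 2)) ^ ((j'.modNat.modNat.divNat : Fin 2) : ℕ) * 1))
      = Ffun k i j := by
  have hik : (i : ℕ) < k := i.isLt
  have hdim : 2 ^ (i : ℕ) * (2 * 2 ^ (k - 1 - (i : ℕ))) = 2 ^ k := by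
    have h1 := pf1 hik
    have h2 := two_mul_pow k
    omega
  have htopv : ((j'.divNat : Fin 2) : ℕ) = (j : ℕ) / 2 ^ k := by
    rw [Fin.coe_divNat, hjj, hdim]
  by_cases hj : (j : ℕ) < 2 ^ k
  · have h0 : j'.divNat = (0 : Fin 2) := by
      apply Fin.ext
      rw [htopv]
      simp [Nat.div_eq_of_lt hj]
    rw [h0]
    simp [e1d, e2d, Ffun, hj]
  · have hub : (j : ℕ) < 2 * 2 ^ k := j.isLt
    have h1 : j'.divNat = (1 : Fin 2) := by
      apply Fin.ext
      rw [htopv]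
      have hd : (j : ℕ) / 2 ^ k = 1 :=
        Nat.div_eq_of_lt_le (by omega) (by omega)
      simp [hd]
    have hb : ((j'.modNat.modNat.divNat : Fin 2) : ℕ)
        = (j : ℕ) / 2 ^ (k - 1 - (i : ℕ)) % 2 := by
      have e1 : 2 * 2 ^ (k - 1 - (i : ℕ)) = 2 ^ (k - (i : ℕ)) := by
        rw [two_mul_pow]
        congr 1
        omega
      have hdvd : 2 * 2 ^ (k - 1 - (i : ℕ)) ∣ 2 ^ k := by
        rw [e1]
        exact pow_dvd_pow 2 (by omega)
      rw [Fin.coe_divNat, Fin.coe_modNat, Fin.coe_modNat, hjj, hdim,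
        Nat.mod_mod_of_dvd _ hdvd,
        show 2 * 2 ^ (k - 1 - (i : ℕ)) = 2 ^ (k - 1 - (i : ℕ)) * 2 by ring,
        Nat.mod_mul_right_div_self]
    rw [h1, hb]
    simp [e1d, e2d, Ffun, hj]

lemma factor_diag (k : ℕ) (i : Fin k) :
    castM ((pf1 i.isLt).trans (two_mul_pow k).symm)
      (kron E1
          (kron (1 : Matrix (Fin (2 ^ (i : ℕ))) (Fin (2 ^ (i : ℕ))) ℂ)
            (kron (1 : Matrix (Fin 2) (Fin 2) ℂ)
              (1 : Matrix (Fin (2 ^ (k - 1 - (i : ℕ)))) (Fin (2 ^ (k - 1 - (i : ℕ)))) ℂ))) +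
        kron E2
          (kron (1 : Matrix (Fin (2 ^ (i : ℕ))) (Fin (2 ^ (i : ℕ))) ℂ)
            (kron (Rm ((i : ℕ) + 2))
              (1 : Matrix (Fin (2 ^ (k - 1 - (i : ℕ)))) (Fin (2 ^ (k - 1 - (i : ℕ)))) ℂ))))
      = Matrix.diagonal (Ffun k i) := by
  rw [E1_diag, E2_diag, Rm, ← Matrix.diagonal_one, ← Matrix.diagonal_one,
    ← Matrix.diagonal_one]
  simp only [kron_diagonal]
  rw [Matrix.diagonal_add, castM_diagonal]
  exact congrArg Matrix.diagonal (funext fun j => scalar_eq k i j _ rfl)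

lemma expsum (k jv : ℕ) (h1 : 2 ^ k ≤ jv) (h2 : jv < 2 * 2 ^ k) :
    ∑ i : Fin k, 2 ^ (k - 1 - (i : ℕ)) * (jv / 2 ^ (k - 1 - (i : ℕ)) % 2)
      = jv - 2 ^ k := by
  rw [Fin.sum_univ_eq_sum_range (fun r => 2 ^ (k - 1 - r) * (jv / 2 ^ (k - 1 - r) % 2)) k]
  rw [Finset.sum_range_reflect (fun r => 2 ^ r * (jv / 2 ^ r % 2)) k]
  set m := jv - 2 ^ k with hm
  have hmlt : m < 2 ^ k := by omega
  have key : ∀ r ∈ Finset.range k, 2 ^ r * (jv / 2 ^ r % 2) = 2 ^ r * (m / 2 ^ r % 2) := by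
    intro r hr
    rw [Finset.mem_range] at hr
    have hjv : jv = m + 2 ^ (k - r) * 2 ^ r := by
      rw [← pow_add]
      have : k - r + r = k := by omega
      rw [this]; omega
    have hdiv : jv / 2 ^ r = m / 2 ^ r + 2 ^ (k - r) := by
      rw [hjv]
      exact Nat.add_mul_div_right _ _ (Nat.pow_pos (by norm_num))
    have hkr : 2 ^ (k - r) = 2 ^ (k - r - 1) * 2 := by
      rw [← pow_succ]
      congr 1
      omega
    rw [hdiv, hkr, Nat.add_mul_mod_self_right]
  rw [Finset.sum_congr rfl key]
  exact digitsum k m hmlt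

end DiagFact

open DiagFact in
theorem diag_factorization (k : ℕ) :
    dsum (1 : Matrix (Fin (2 ^ k)) (Fin (2 ^ k)) ℂ) (OmegaM k) =
      (List.map
        (fun (i : Fin k) =>
          castM ((pf1 i.isLt).trans (two_mul_pow k).symm)
            (kron E1
                (kron (1 : Matrix (Fin (2 ^ (i : ℕ))) (Fin (2 ^ (i : ℕ))) ℂ)
                  (kron (1 : Matrix (Fin 2) (Fin 2) ℂ)
                    (1 : Matrix (Fin (2 ^ (k - 1 - (i : ℕ)))) (Fin (2 ^ (k - 1 - (i : ℕ)))) ℂ))) +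
              kron E2
                (kron (1 : Matrix (Fin (2 ^ (i : ℕ))) (Fin (2 ^ (i : ℕ))) ℂ)
                  (kron (Rm ((i : ℕ) + 2))
                    (1 : Matrix (Fin (2 ^ (k - 1 - (i : ℕ)))) (Fin (2 ^ (k - 1 - (i : ℕ)))) ℂ)))))
        (List.finRange k)).prod := by
  simp only [factor_diag]
  rw [listprod_diagonal, ← Matrix.diagonal_one, OmegaM, dsum_diagonal]
  refine congrArg Matrix.diagonal (funext fun j => ?_)
  rw [← Fin.prod_univ_def]
  by_cases hj : (j : ℕ) < 2 ^ k
  · rw [dif_pos hj]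
    simp [Ffun, hj]
  · rw [dif_neg hj]
    have hub : (j : ℕ) < 2 * 2 ^ k := j.isLt
    have hterm : ∀ i : Fin k, Ffun k i j
        = qomega (2 ^ (k + 1)) ^ (2 ^ (k - 1 - (i : ℕ)) * ((j : ℕ) / 2 ^ (k - 1 - (i : ℕ)) % 2)) := by
      intro i
      rw [Ffun, if_neg hj]
      have hsum : (k - 1 - (i : ℕ)) + ((i : ℕ) + 2) = k + 1 := by
        have := i.isLt; omega
      conv_rhs => rw [← hsum, pow_mul, qomega_pow]
    rw [Finset.prod_congr rfl (fun i _ => hterm i), Finset.prod_pow_eq_pow_sum,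
      expsum k (j : ℕ) (by omega) hub]

end
end

section
/- The 2ⁿ×2ⁿ DFT matrix Fₙ factorizes as Fₙ = Pₙ · A⁽⁰⁾ · A⁽¹⁾ ⋯ A⁽ⁿ⁻¹⁾, where A⁽ᵏ⁾ = I_{2^{n−k−1}} ⊗ B_{k+1} and B_{k+1} = (I_{2^k} ⊕ Ω_k)(H ⊗ I_{2^k}), with H the 2×2 Hadamard matrix, Ω_k = diag(ω_{2^{k+1}}^j)_{j=0}^{2^k−1}, and Pₙ the bit-reversal permutation matrix. -/
open Matrix Complex BigOperators

noncomputable section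

lemma pf9 {k n : ℕ} (h : k < n) : 2 ^ (n - k - 1) * (2 * 2 ^ k) = 2 ^ n :=
  calc 2 ^ (n - k - 1) * (2 * 2 ^ k)
      = 2 ^ ((n - k - 1) + (1 + k)) := by rw [pow_add, pow_add, pow_one]
    _ = 2 ^ n := by congr 1; omega


/-! ### auxiliary lemmas -/

section Aux

open Kronecker

lemma qomega_pow_self (N : ℕ) (hN : N ≠ 0) : qomega N ^ N = 1 := by
  have h : (N : ℂ) ≠ 0 := Nat.cast_ne_zero.mpr hN
  rw [qomega, ← Complex.exp_nat_mul]
  rw [mul_div_cancel₀ _ h]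
  rw [← Complex.exp_int_mul_two_pi_mul_I (-1)]
  congr 1; push_cast; ring

lemma qomega_sq (n : ℕ) : qomega (2 ^ (n+1)) ^ 2 = qomega (2 ^ n) := by
  have h : ((2:ℂ) ^ n) ≠ 0 := by
    apply pow_ne_zero; norm_num
  rw [qomega, qomega, ← Complex.exp_nat_mul]
  congr 1
  push_cast
  rw [pow_succ]
  field_simp

lemma qomega_pow_half (n : ℕ) : qomega (2 ^ (n+1)) ^ (2 ^ n) = -1 := by
  have h : ((2:ℂ) ^ n) ≠ 0 := by apply pow_ne_zero; norm_num
  rw [qomega, ← Complex.exp_nat_mul]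
  have : ((2 ^ n : ℕ) : ℂ) * (-(2 * Real.pi * Complex.I) / (((2:ℕ) ^ (n+1) : ℕ) : ℂ)) = -(Real.pi * Complex.I) := by
    push_cast
    rw [pow_succ]
    field_simp
  rw [this, Complex.exp_neg, Complex.exp_pi_mul_I]
  norm_num

lemma qomega_one : qomega 1 = 1 := by
  have := qomega_pow_self 1 one_ne_zero
  simpa using this

lemma bitRevNat_zero (j : ℕ) : bitRevNat 0 j = 0 := by simp [bitRevNat]

lemma bitRevNat_succ_low (n r b : ℕ) (hb : b < 2) :
    bitRevNat (n+1) (2*r + b) = b * 2^n + bitRevNat n r := by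
  unfold bitRevNat
  rw [Finset.sum_range_succ']
  have h0 : (2*r + b) / 2 ^ 0 % 2 * 2 ^ (n + 1 - 1 - 0) = b * 2 ^ n := by
    simp [Nat.mul_add_mod, Nat.mod_eq_of_lt hb]
  rw [h0, add_comm]
  congr 1
  apply Finset.sum_congr rfl
  intro i hi
  have hi' : i < n := Finset.mem_range.mp hi
  have hdiv : (2*r + b) / 2 ^ (i+1) = r / 2 ^ i := by
    rw [pow_succ, mul_comm (2^i) 2, ← Nat.div_div_eq_div_mul]
    congr 1
    omega
  rw [hdiv]
  have he : n + 1 - 1 - (i + 1) = n - 1 - i := by omega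
  rw [he]

lemma bitRevNat_succ_high (n j : ℕ) (hj : j < 2^(n+1)) :
    bitRevNat (n+1) j = 2 * bitRevNat n (j % 2^n) + j / 2^n := by
  unfold bitRevNat
  rw [Finset.sum_range_succ]
  have hlast : j / 2 ^ n % 2 * 2 ^ (n + 1 - 1 - n) = j / 2^n := by
    have : j / 2^n < 2 := by
      apply Nat.div_lt_of_lt_mul
      rw [← pow_succ]
      exact hj
    simp [Nat.mod_eq_of_lt this]
  rw [hlast]
  congr 1
  rw [Finset.mul_sum]
  apply Finset.sum_congr rfl
  intro i hi
  have hi' : i < n := Finset.mem_range.mp hi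
  have h2 : j % 2^n / 2^i % 2 = j / 2^i % 2 := by
    have hpow : (2:ℕ)^n = 2^i * 2^(n-i) := by rw [← pow_add]; congr 1; omega
    rw [hpow, Nat.mod_mul_right_div_self, Nat.mod_mod_of_dvd]
    exact dvd_pow_self 2 (by omega)
  rw [h2]
  rw [mul_comm 2 _, mul_assoc]
  congr 1
  rw [← pow_succ]
  congr 1
  omega

lemma bitRevNat_lt (n j : ℕ) (hj : j < 2^n) : bitRevNat n j < 2^n := by
  induction n generalizing j with
  | zero => simpa [bitRevNat_zero] using hj
  | succ n ih =>
    rw [bitRevNat_succ_high n j hj]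
    have h1 : bitRevNat n (j % 2^n) < 2^n := ih _ (Nat.mod_lt _ (by positivity))
    have h2 : j / 2^n < 2 := by
      apply Nat.div_lt_of_lt_mul; rw [← pow_succ]; exact hj
    rw [pow_succ]
    omega

lemma bitRevNat_invol (n j : ℕ) (hj : j < 2^n) : bitRevNat n (bitRevNat n j) = j := by
  induction n generalizing j with
  | zero => simp [bitRevNat_zero]; omega
  | succ n ih =>
    have h2 : j / 2^n < 2 := by
      apply Nat.div_lt_of_lt_mul; rw [← pow_succ]; exact hj
    rw [bitRevNat_succ_high n j hj, bitRevNat_succ_low n _ _ h2,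
        ih _ (Nat.mod_lt _ (by positivity))]
    exact Nat.div_add_mod' j (2^n)

lemma castM_mul {a b : ℕ} (h : a = b) (A B : Matrix (Fin a) (Fin a) ℂ) :
    castM h (A * B) = castM h A * castM h B := by
  exact (Matrix.submatrix_mul_equiv A B (Fin.cast h.symm) (finCongr h.symm) (Fin.cast h.symm)).symm

lemma castM_one {a b : ℕ} (h : a = b) : castM h (1 : Matrix (Fin a) (Fin a) ℂ) = 1 :=
  Matrix.submatrix_one_equiv (finCongr h.symm)

lemma kron_eq {a b c d : ℕ} (A : Matrix (Fin a) (Fin b) ℂ) (B : Matrix (Fin c) (Fin d) ℂ) :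
    kron A B = (A ⊗ₖ B).submatrix
      (fun i => (finProdFinEquiv.symm i : Fin a × Fin c))
      (fun j => (finProdFinEquiv.symm j : Fin b × Fin d)) := rfl

lemma kron_mul {a b c a' b' c' : ℕ} (A : Matrix (Fin a) (Fin b) ℂ) (B : Matrix (Fin b) (Fin c) ℂ)
    (A' : Matrix (Fin a') (Fin b') ℂ) (B' : Matrix (Fin b') (Fin c') ℂ) :
    kron A A' * kron B B' = kron (A * B) (A' * B') := by
  rw [kron_eq, kron_eq, kron_eq]
  have h2 := Matrix.submatrix_mul_equiv (A ⊗ₖ A') (B ⊗ₖ B')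
    (fun i => (finProdFinEquiv.symm i : Fin a × Fin a')) finProdFinEquiv.symm
    (fun j => (finProdFinEquiv.symm j : Fin c × Fin c'))
  exact h2.trans (by rw [Matrix.mul_kronecker_mul])

lemma kron_one_one {a c : ℕ} :
    kron (1 : Matrix (Fin a) (Fin a) ℂ) (1 : Matrix (Fin c) (Fin c) ℂ) = 1 := by
  rw [kron_eq, Matrix.one_kronecker_one]
  exact Matrix.submatrix_one_equiv finProdFinEquiv.symm

lemma gstep (n k : ℕ) (hk : k < n) (B : Matrix (Fin (2*2^k)) (Fin (2*2^k)) ℂ) :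
    castM (pf9 (show k < n+1 by omega))
        (kron (1 : Matrix (Fin (2^(n+1-k-1))) (Fin (2^(n+1-k-1))) ℂ) B)
      = castM (two_mul_pow n)
        (kron (1 : Matrix (Fin 2) (Fin 2) ℂ)
          (castM (pf9 hk) (kron (1 : Matrix (Fin (2^(n-k-1))) (Fin (2^(n-k-1))) ℂ) B))) := by
  have hk1 : k < n + 1 := by omega
  set s : ℕ := 2 * 2 ^ k with hs
  set t : ℕ := 2 ^ (n - k - 1) with ht
  have hst : (2:ℕ)^n = s * t := by rw [mul_comm]; exact (pf9 hk).symm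
  funext i j
  simp only [castM, Matrix.submatrix_apply, kron, Matrix.one_apply]
  have hdvd : s ∣ 2^n := Dvd.intro_left t (pf9 hk)
  have hmod : ∀ x : ℕ, x % 2^n % s = x % s := fun x => Nat.mod_mod_of_dvd x hdvd
  have em : ∀ (x : Fin (2^(n+1))),
      Fin.modNat (Fin.cast (pf9 hk1).symm x)
        = Fin.modNat (Fin.cast (pf9 hk).symm
            (Fin.modNat (Fin.cast (two_mul_pow n).symm x))) := by
    intro x
    apply Fin.ext
    simp only [Fin.coe_modNat, Fin.coe_cast]
    exact (hmod x).symm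
  rw [em i, em j]
  have hdd : ∀ x : ℕ, x / 2^n = x / s / t := by
    intro x; rw [Nat.div_div_eq_div_mul, ← hst]
  have hmd : ∀ x : ℕ, (x % 2^n) / s = x / s % t := by
    intro x; rw [hst, Nat.mod_mul_right_div_self]
  have hcond : (Fin.divNat (Fin.cast (pf9 hk1).symm i) = Fin.divNat (Fin.cast (pf9 hk1).symm j))
      ↔ ((Fin.divNat (Fin.cast (two_mul_pow n).symm i) = Fin.divNat (Fin.cast (two_mul_pow n).symm j))
        ∧ (Fin.divNat (Fin.cast (pf9 hk).symm (Fin.modNat (Fin.cast (two_mul_pow n).symm i)))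
           = Fin.divNat (Fin.cast (pf9 hk).symm (Fin.modNat (Fin.cast (two_mul_pow n).symm j))))) := by
    simp only [Fin.ext_iff, Fin.coe_divNat, Fin.coe_modNat, Fin.coe_cast]
    rw [hdd, hdd, hmd, hmd]
    constructor
    · intro h; exact ⟨by rw [h], by rw [h]⟩
    · rintro ⟨h1, h2⟩
      have e : t * ((i:ℕ)/s/t) + (i:ℕ)/s % t = t * ((j:ℕ)/s/t) + (j:ℕ)/s % t := by
        rw [h1, h2]
      rwa [Nat.div_add_mod, Nat.div_add_mod] at e
  by_cases hc : Fin.divNat (Fin.cast (pf9 hk1).symm i) = Fin.divNat (Fin.cast (pf9 hk1).symm j)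
  · obtain ⟨h1, h2⟩ := hcond.mp hc
    simp only [if_pos hc, if_pos h1, if_pos h2, one_mul]
  · rw [if_neg hc]
    have : ¬ _ ∨ ¬ _ := not_and_or.mp (fun hh => hc (hcond.mpr hh))
    rcases this with h | h
    · rw [if_neg h]; ring
    · rw [if_neg h]; ring

lemma lift_prod (n : ℕ) (L : List (Matrix (Fin (2^n)) (Fin (2^n)) ℂ)) :
    (L.map (fun M => castM (two_mul_pow n) (kron (1 : Matrix (Fin 2) (Fin 2) ℂ) M))).prod
      = castM (two_mul_pow n) (kron 1 L.prod) := by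
  induction L with
  | nil => simp only [List.map_nil, List.prod_nil, kron_one_one, castM_one]
  | cons A L ih =>
      rw [List.map_cons, List.prod_cons, List.prod_cons, ih, ← castM_mul, kron_mul, one_mul]

lemma dsum_one_omega (n : ℕ) :
    dsum (1 : Matrix (Fin (2^n)) (Fin (2^n)) ℂ) (OmegaM n)
      = Matrix.diagonal (fun i : Fin (2*2^n) =>
          if (i:ℕ) < 2^n then 1 else qomega (2^(n+1)) ^ ((i:ℕ) - 2^n)) := by
  funext i j
  by_cases hij : i = j
  · subst hij
    rw [Matrix.diagonal_apply_eq]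
    show dsum _ _ i i = _
    unfold dsum
    by_cases h1 : (i:ℕ) < 2^n
    · rw [dif_pos h1, dif_pos h1, if_pos h1, Matrix.one_apply_eq]
    · rw [dif_neg h1, dif_neg h1, if_neg h1]
      exact Matrix.diagonal_apply_eq _ _
  · rw [Matrix.diagonal_apply_ne _ hij]
    show dsum _ _ i j = 0
    unfold dsum
    have hij' : (i:ℕ) ≠ (j:ℕ) := fun h => hij (Fin.ext h)
    by_cases h1 : (i:ℕ) < 2^n <;> by_cases h2 : (j:ℕ) < 2^n
    · rw [dif_pos h1, dif_pos h2]
      exact Matrix.one_apply_ne (fun h => hij' (by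
        have := congrArg Fin.val h; simpa using this))
    · rw [dif_pos h1, dif_neg h2]
    · rw [dif_neg h1, dif_pos h2]
    · rw [dif_neg h1, dif_neg h2]
      exact Matrix.diagonal_apply_ne _
        (fun h => by have := congrArg Fin.val h; simp only at this; omega)

def Gm (n : ℕ) : Matrix (Fin (2 ^ n)) (Fin (2 ^ n)) ℂ :=
  (List.map
    (fun (k : Fin n) =>
      castM (pf9 k.isLt)
        (kron (1 : Matrix (Fin (2 ^ (n - (k : ℕ) - 1))) (Fin (2 ^ (n - (k : ℕ) - 1))) ℂ)
          (dsum (1 : Matrix (Fin (2 ^ (k : ℕ))) (Fin (2 ^ (k : ℕ))) ℂ) (OmegaM (k : ℕ)) *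
            kron Hm (1 : Matrix (Fin (2 ^ (k : ℕ))) (Fin (2 ^ (k : ℕ))) ℂ))))
    (List.finRange n)).prod

lemma Gm_succ (n : ℕ) :
    Gm (n+1) = castM (two_mul_pow n) (kron (1 : Matrix (Fin 2) (Fin 2) ℂ) (Gm n)) *
      castM (pf9 (show n < n+1 by omega))
        (kron (1 : Matrix (Fin (2^(n+1-n-1))) (Fin (2^(n+1-n-1))) ℂ)
          (dsum (1 : Matrix (Fin (2^n)) (Fin (2^n)) ℂ) (OmegaM n) *
            kron Hm (1 : Matrix (Fin (2^n)) (Fin (2^n)) ℂ))) := by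
  unfold Gm
  rw [List.finRange_succ_last, List.map_append, List.prod_append, List.map_map]
  congr 1
  · rw [← lift_prod n, List.map_map]
    refine congrArg List.prod (List.map_congr_left (fun k _ => ?_))
    simp only [Function.comp_apply, Fin.coe_castSucc]
    exact gstep n k k.isLt _
  · simp only [List.map_cons, List.map_nil, List.prod_cons, List.prod_nil, mul_one,
      Fin.val_last]

lemma Gm_apply (n : ℕ) : ∀ j l : Fin (2^n),
    Gm n j l = ((1 / Real.sqrt (2^n) : ℝ) : ℂ) * qomega (2^n) ^ (bitRevNat n (j:ℕ) * (l:ℕ)) := by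
  induction n with
  | zero =>
      intro j l
      have hG : Gm 0 = 1 := by unfold Gm; simp
      have hjl : j = l := by
        have h1 := j.isLt; have h2 := l.isLt
        simp only [pow_zero] at h1 h2
        exact Fin.ext (by omega)
      subst hjl
      rw [hG, Matrix.one_apply_eq]
      simp [bitRevNat_zero]
  | succ n ih =>
      intro j l
      have hN : (0:ℕ) < 2^n := pow_pos (by norm_num) n
      have hb : (j:ℕ)/2^n < 2 := Nat.div_lt_of_lt_mul (by rw [← pow_succ]; exact j.isLt)
      have hc : (l:ℕ)/2^n < 2 := Nat.div_lt_of_lt_mul (by rw [← pow_succ]; exact l.isLt)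
      have hl0 : (l:ℕ)%2^n < 2^n := Nat.mod_lt _ hN
      have hj0 : (j:ℕ)%2^n < 2^n := Nat.mod_lt _ hN
      have hpow : (2:ℕ)^(n+1) = 2*2^n := (two_mul_pow n).symm
      have hle : (j:ℕ)/2^n * 2^n ≤ 2^n := by
        rcases (show (j:ℕ)/2^n = 0 ∨ (j:ℕ)/2^n = 1 from by
          generalize (j:ℕ)/2^n = q at hb ⊢; omega) with h | h <;> rw [h] <;> omega
      have hm0lt : (j:ℕ)/2^n * 2^n + (l:ℕ)%2^n < 2^(n+1) := by omega
      rw [Gm_succ, Matrix.mul_apply]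
      have F1 : ∀ m : Fin (2^(n+1)),
          castM (two_mul_pow n) (kron (1 : Matrix (Fin 2) (Fin 2) ℂ) (Gm n)) j m
            = (if (j:ℕ)/2^n = (m:ℕ)/2^n then 1 else 0) *
                (((1 / Real.sqrt (2^n) : ℝ) : ℂ) *
                  qomega (2^n) ^ (bitRevNat n ((j:ℕ)%2^n) * ((m:ℕ)%2^n))) := by
        intro m
        simp only [castM, Matrix.submatrix_apply, kron, Matrix.one_apply, ih]
        simp only [Fin.ext_iff, Fin.coe_divNat, Fin.coe_modNat, Fin.coe_cast]
      have F2 : ∀ m : Fin (2^(n+1)),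
          castM (pf9 (show n < n+1 by omega))
            (kron (1 : Matrix (Fin (2^(n+1-n-1))) (Fin (2^(n+1-n-1))) ℂ)
              (dsum (1 : Matrix (Fin (2^n)) (Fin (2^n)) ℂ) (OmegaM n) *
                kron Hm (1 : Matrix (Fin (2^n)) (Fin (2^n)) ℂ))) m l
            = (if (m:ℕ) < 2^n then 1 else qomega (2^(n+1)) ^ ((m:ℕ) - 2^n)) *
                (Hm ⟨(m:ℕ)/2^n, Nat.div_lt_of_lt_mul (by rw [← pow_succ]; exact m.isLt)⟩
                    ⟨(l:ℕ)/2^n, hc⟩ *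
                  (if (m:ℕ)%2^n = (l:ℕ)%2^n then 1 else 0)) := by
        intro m
        have h0 : (2:ℕ)^(n+1-n-1) = 1 := by
          rw [show n+1-n-1 = 0 from by omega, pow_zero]
        have huniq : ∀ x y : Fin (2^(n+1-n-1)), x = y := by
          intro x y
          apply Fin.ext
          have h1 := x.isLt; have h2 := y.isLt
          omega
        have hmv : (m:ℕ) % (2*2^n) = (m:ℕ) :=
          Nat.mod_eq_of_lt (by rw [two_mul_pow]; exact m.isLt)
        have hlv : (l:ℕ) % (2*2^n) = (l:ℕ) :=
          Nat.mod_eq_of_lt (by rw [two_mul_pow]; exact l.isLt)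
        simp only [castM, Matrix.submatrix_apply, kron, dsum_one_omega, Matrix.diagonal_mul,
          Matrix.one_apply, if_pos (huniq _ _), one_mul]
        simp only [Fin.ext_iff, Fin.coe_divNat, Fin.coe_modNat, Fin.coe_cast, hmv, hlv]
        congr 1
        congr 2
        · exact Fin.ext (by simp only [Fin.coe_divNat, Fin.coe_modNat, Fin.coe_cast, hmv])
        · exact Fin.ext (by simp only [Fin.coe_divNat, Fin.coe_modNat, Fin.coe_cast, hlv])
      simp only [F1, F2]
      rw [Finset.sum_eq_single (⟨(j:ℕ)/2^n * 2^n + (l:ℕ)%2^n, hm0lt⟩ : Fin (2^(n+1)))]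
      · -- the main value
        have hdm : ((j:ℕ)/2^n * 2^n + (l:ℕ)%2^n) / 2^n = (j:ℕ)/2^n := by
          rw [mul_comm, Nat.mul_add_div hN, Nat.div_eq_of_lt hl0, add_zero]
        have hmm : ((j:ℕ)/2^n * 2^n + (l:ℕ)%2^n) % 2^n = (l:ℕ)%2^n := by
          rw [mul_comm, Nat.mul_add_mod, Nat.mod_eq_of_lt hl0]
        simp only [hdm, hmm, if_pos rfl]
        rw [bitRevNat_succ_high n (j:ℕ) j.isLt]
        have hl : (l:ℕ) = 2^n * ((l:ℕ)/2^n) + (l:ℕ)%2^n := (Nat.div_add_mod _ _).symm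
        conv_rhs => rw [hl]
        have hsqrt : ((1 / Real.sqrt (2^(n+1)) : ℝ) : ℂ)
            = ((1/Real.sqrt 2 : ℝ):ℂ) * ((1/Real.sqrt (2^n) : ℝ):ℂ) := by
          have hr : (1 / Real.sqrt (2^(n+1)) : ℝ)
              = (1/Real.sqrt 2) * (1/Real.sqrt (2^n)) := by
            rw [pow_succ, Real.sqrt_mul (by positivity)]
            ring
          rw [hr]; push_cast; ring
        have w1 : ∀ x : ℕ, qomega (2^(n+1)) ^ (2 * x) = qomega (2^n) ^ x := by
          intro x; rw [pow_mul, qomega_sq]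
        have hne : ((2:ℕ)^(n+1)) ≠ 0 := by positivity
        have w2 : ∀ x : ℕ, qomega (2^(n+1)) ^ (2*2^n * x) = 1 := by
          intro x
          rw [show 2*2^n*x = 2^(n+1)*x from by rw [two_mul_pow], pow_mul,
            qomega_pow_self _ hne, one_pow]
        set r := bitRevNat n ((j:ℕ)%2^n) with hr
        rcases (show (j:ℕ)/2^n = 0 ∨ (j:ℕ)/2^n = 1 from by
            generalize (j:ℕ)/2^n = q at hb ⊢; omega) with hb0 | hb0 <;>
          rcases (show (l:ℕ)/2^n = 0 ∨ (l:ℕ)/2^n = 1 from by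
            generalize (l:ℕ)/2^n = q at hc ⊢; omega) with hc0 | hc0 <;>
            simp only [hb0, hc0, zero_mul, one_mul, zero_add, add_zero, mul_zero, mul_one,
              Fin.mk_zero, Fin.mk_one, if_true]
        · rw [if_pos hl0,
            show 2 * r * ((l:ℕ)%2^n) = 2 * (r * ((l:ℕ)%2^n)) from by ring, w1, hsqrt]
          simp [Hm]; ring
        · rw [if_pos hl0,
            show 2 * r * (2^n + (l:ℕ)%2^n)
              = 2*2^n * r + 2 * (r * ((l:ℕ)%2^n)) from by ring,
            pow_add (qomega (2^(n+1))) (2*2^n*r) (2 * (r * ((l:ℕ)%2^n))), w2, w1, one_mul, hsqrt]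
          simp [Hm]; ring
        · rw [if_neg (show ¬ (2^n + (l:ℕ)%2^n < 2^n) from by omega), Nat.add_sub_cancel_left,
            show (2*r+1) * ((l:ℕ)%2^n)
              = 2 * (r * ((l:ℕ)%2^n)) + (l:ℕ)%2^n from by ring,
            pow_add (qomega (2^(n+1))) (2 * (r * ((l:ℕ)%2^n))) ((l:ℕ)%2^n), w1, hsqrt]
          simp [Hm]; ring
        · rw [if_neg (show ¬ (2^n + (l:ℕ)%2^n < 2^n) from by omega), Nat.add_sub_cancel_left,
            show (2*r+1) * (2^n + (l:ℕ)%2^n)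
              = 2*2^n * r + (2 * (r * ((l:ℕ)%2^n)) + (2^n + (l:ℕ)%2^n))
              from by ring,
            pow_add (qomega (2^(n+1))) (2*2^n*r)
              (2 * (r * ((l:ℕ)%2^n)) + (2^n + (l:ℕ)%2^n)),
            pow_add (qomega (2^(n+1))) (2 * (r * ((l:ℕ)%2^n))) (2^n + (l:ℕ)%2^n),
            pow_add (qomega (2^(n+1))) (2^n) ((l:ℕ)%2^n),
            w2, w1, one_mul, qomega_pow_half, hsqrt]
          simp [Hm]; ring
      · intro m _ hne
        have key : (j:ℕ)/2^n ≠ (m:ℕ)/2^n ∨ (m:ℕ)%2^n ≠ (l:ℕ)%2^n := by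
          by_contra hcon
          push_neg at hcon
          obtain ⟨h1, h2⟩ := hcon
          apply hne
          apply Fin.ext
          show (m:ℕ) = (j:ℕ)/2^n * 2^n + (l:ℕ)%2^n
          calc (m:ℕ) = 2^n * ((m:ℕ)/2^n) + (m:ℕ)%2^n := (Nat.div_add_mod _ _).symm
            _ = (j:ℕ)/2^n * 2^n + (l:ℕ)%2^n := by rw [← h1, h2]; ring
        rcases key with h | h
        · rw [if_neg h]; ring
        · rw [if_neg h]; ring
      · intro h
        exact absurd (Finset.mem_univ _) h

theorem qft_factorization (n : ℕ) :
    dftM (2 ^ n) =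
      Pm n *
        (List.map
          (fun (k : Fin n) =>
            castM (pf9 k.isLt)
              (kron (1 : Matrix (Fin (2 ^ (n - (k : ℕ) - 1))) (Fin (2 ^ (n - (k : ℕ) - 1))) ℂ)
                (dsum (1 : Matrix (Fin (2 ^ (k : ℕ))) (Fin (2 ^ (k : ℕ))) ℂ) (OmegaM (k : ℕ)) *
                  kron Hm (1 : Matrix (Fin (2 ^ (k : ℕ))) (Fin (2 ^ (k : ℕ))) ℂ))))
          (List.finRange n)).prod := by
  show dftM (2^n) = Pm n * Gm n
  funext i l
  show dftM (2^n) i l = (Pm n * Gm n) i l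
  rw [Matrix.mul_apply]
  rw [Finset.sum_eq_single (⟨bitRevNat n (i:ℕ), bitRevNat_lt n _ i.isLt⟩ : Fin (2^n))]
  · rw [Gm_apply]
    show dftM (2^n) i l
      = (if (i:ℕ) = bitRevNat n (bitRevNat n (i:ℕ)) then (1:ℂ) else 0) * _
    rw [if_pos (bitRevNat_invol n (i:ℕ) i.isLt).symm, one_mul]
    show ((1 / Real.sqrt ((2^n : ℕ)) : ℝ) : ℂ) * qomega (2^n) ^ ((i:ℕ) * (l:ℕ)) = _
    rw [show bitRevNat n ((⟨bitRevNat n (i:ℕ), bitRevNat_lt n _ i.isLt⟩ : Fin (2^n)) : ℕ)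
        = (i:ℕ) from bitRevNat_invol n (i:ℕ) i.isLt]
    rw [show (((2^n : ℕ) : ℝ)) = ((2:ℝ)^n) from by push_cast; ring]
  · intro b _ hne
    show (if (i:ℕ) = bitRevNat n (b:ℕ) then (1:ℂ) else 0) * _ = 0
    rw [if_neg, zero_mul]
    intro h
    apply hne
    apply Fin.ext
    show (b:ℕ) = bitRevNat n (i:ℕ)
    calc (b:ℕ) = bitRevNat n (bitRevNat n (b:ℕ)) := (bitRevNat_invol n _ b.isLt).symm
      _ = bitRevNat n (i:ℕ) := by rw [← h]
  · intro h
    exact absurd (Finset.mem_univ _) h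

end Aux

end
end

section
/- For d ≥ 2 and k ≥ 1, the d^{k+1}×d^{k+1} diagonal matrix I_{d^k} ⊕ Ω_k ⊕ Ω_k² ⊕ ⋯ ⊕ Ω_k^{d−1} factorizes as ∏_{i=1}^{k} [ Σ_{ℓ=1}^{d} E_ℓ ⊗ I_{d^{i−1}} ⊗ R_{i+1}^{ℓ−1} ⊗ I_{d^{k−i}} ], where E_ℓ = e_ℓ e_ℓᵀ ∈ ℂ^{d×d}. -/
open Matrix Complex BigOperators

noncomputable section

/-- Radix-`d` rotation `R_n = diag(ω_{d^n}^k)_{k=0}^{d-1}`. -/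
def RmD (d n : ℕ) : Matrix (Fin d) (Fin d) ℂ :=
  Matrix.diagonal (fun k : Fin d => qomega (d ^ n) ^ (k : ℕ))

/-- Radix-`d` `Ω_n = diag(ω_{d^{n+1}}^j)_{j=0}^{d^n-1}`. -/
def OmegaD (d n : ℕ) : Matrix (Fin (d ^ n)) (Fin (d ^ n)) ℂ :=
  Matrix.diagonal (fun j : Fin (d ^ n) => qomega (d ^ (n + 1)) ^ (j : ℕ))

/-- `E_ℓ = e_ℓ e_ℓᵀ` in dimension `d`. -/
def stdE {d : ℕ} (l : Fin d) : Matrix (Fin d) (Fin d) ℂ := Matrix.single l l 1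

/-- Block-diagonal direct sum of `d` square blocks of size `m`. -/
def ddsum (d m : ℕ) (Ms : Fin d → Matrix (Fin m) (Fin m) ℂ) :
    Matrix (Fin (d * m)) (Fin (d * m)) ℂ :=
  fun i j => if i.divNat = j.divNat then Ms i.divNat i.modNat j.modNat else 0

lemma d_mul_pow (d n : ℕ) : d * d ^ n = d ^ (n + 1) := by rw [pow_succ]; ring

lemma pfd {d i k : ℕ} (h : i < k) : d * (d ^ i * (d * d ^ (k - 1 - i))) = d ^ (k + 1) :=
  calc d * (d ^ i * (d * d ^ (k - 1 - i)))
      = d ^ (1 + (i + (1 + (k - 1 - i)))) := by rw [pow_add, pow_add, pow_add, pow_one]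
    _ = d ^ (k + 1) := by congr 1; omega



section Aux

lemma qomega_pow_eq {M t : ℕ} (hM : 0 < M) (ht : 0 < t) :
    qomega (M * t) ^ t = qomega M := by
  unfold qomega
  rw [← Complex.exp_nat_mul]
  congr 1
  have hM' : (M : ℂ) ≠ 0 := Nat.cast_ne_zero.2 hM.ne'
  have ht' : (t : ℂ) ≠ 0 := Nat.cast_ne_zero.2 ht.ne'
  push_cast
  field_simp

lemma fin_eq_of_div_mod {a c : ℕ} {i j : Fin (a * c)}
    (h1 : i.divNat = j.divNat) (h2 : i.modNat = j.modNat) : i = j := by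
  apply Fin.ext
  have e1 : (i : ℕ) / c = (j : ℕ) / c := by
    have := congrArg Fin.val h1; simpa [Fin.coe_divNat] using this
  have e2 : (i : ℕ) % c = (j : ℕ) % c := by
    have := congrArg Fin.val h2; simpa [Fin.coe_modNat] using this
  conv_lhs => rw [← Nat.div_add_mod (i : ℕ) c]
  conv_rhs => rw [← Nat.div_add_mod (j : ℕ) c]
  rw [e1, e2]

lemma kron_diagonal {a c : ℕ} (f : Fin a → ℂ) (g : Fin c → ℂ) :
    kron (Matrix.diagonal f) (Matrix.diagonal g)
      = Matrix.diagonal (fun i : Fin (a * c) => f i.divNat * g i.modNat) := by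
  ext i j
  by_cases h : i = j
  · subst h; simp [kron]
  · rw [Matrix.diagonal_apply_ne _ h]
    show Matrix.diagonal f i.divNat j.divNat * Matrix.diagonal g i.modNat j.modNat = 0
    by_cases h1 : i.divNat = j.divNat
    · have h2 : i.modNat ≠ j.modNat := fun h2 => h (fin_eq_of_div_mod h1 h2)
      rw [Matrix.diagonal_apply_ne _ h2, mul_zero]
    · rw [Matrix.diagonal_apply_ne _ h1, zero_mul]

lemma stdE_eq_diagonal {d : ℕ} (l : Fin d) :
    stdE l = Matrix.diagonal (fun m => if m = l then (1 : ℂ) else 0) := by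
  ext i j
  simp only [stdE, Matrix.single, Matrix.of_apply, Matrix.diagonal_apply]
  by_cases h1 : i = j <;> by_cases h2 : i = l <;> simp_all <;> tauto

lemma diagonal_sum_fin {n d : ℕ} (f : Fin d → Fin n → ℂ) :
    ∑ l, Matrix.diagonal (f l) = Matrix.diagonal (fun m => ∑ l, f l m) := by
  ext i j
  rw [Matrix.sum_apply]
  by_cases h : i = j
  · subst h; simp
  · simp [Matrix.diagonal_apply_ne _ h]

lemma castM_diagonal {a b : ℕ} (h : a = b) (f : Fin a → ℂ) :
    castM h (Matrix.diagonal f) = Matrix.diagonal (fun i => f (Fin.cast h.symm i)) := by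
  subst h
  ext i j
  by_cases hij : i = j
  · subst hij; simp [castM]
  · have : Fin.cast rfl i ≠ Fin.cast rfl j := fun hc => hij (by
      apply Fin.ext; have := congrArg Fin.val hc; simpa using this)
    simp [castM, Matrix.diagonal_apply_ne _ hij, Matrix.diagonal_apply_ne _ this]

lemma ddsum_diagonal {d m : ℕ} (f : Fin d → Fin m → ℂ) :
    ddsum d m (fun l => Matrix.diagonal (f l)) =
      Matrix.diagonal (fun i : Fin (d * m) => f i.divNat i.modNat) := by
  ext i j
  show (if i.divNat = j.divNat then Matrix.diagonal (f i.divNat) i.modNat j.modNat else 0) = _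
  by_cases h : i = j
  · subst h; simp
  · rw [Matrix.diagonal_apply_ne _ h]
    by_cases h1 : i.divNat = j.divNat
    · have h2 : i.modNat ≠ j.modNat := fun h2 => h (fin_eq_of_div_mod h1 h2)
      rw [if_pos h1, Matrix.diagonal_apply_ne _ h2]
    · rw [if_neg h1]

lemma diagonal_list_prod {α : Type*} {n : ℕ} (L : List α) (f : α → Fin n → ℂ) :
    (List.map (fun a => Matrix.diagonal (f a)) L).prod
      = Matrix.diagonal (fun m => (L.map (fun a => f a m)).prod) := by
  induction L with
  | nil => simp [← Matrix.diagonal_one]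
  | cons a t ih => simp [ih, Matrix.diagonal_mul_diagonal]

lemma RmD_pow (d n t : ℕ) :
    RmD d n ^ t = Matrix.diagonal (fun m : Fin d => qomega (d ^ n) ^ ((m : ℕ) * t)) := by
  unfold RmD
  rw [Matrix.diagonal_pow]
  refine congrArg Matrix.diagonal ?_
  funext m
  simp [pow_mul]

lemma OmegaD_pow (d n t : ℕ) :
    OmegaD d n ^ t
      = Matrix.diagonal (fun j : Fin (d ^ n) => qomega (d ^ (n + 1)) ^ ((j : ℕ) * t)) := by
  unfold OmegaD
  rw [Matrix.diagonal_pow]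
  refine congrArg Matrix.diagonal ?_
  funext m
  simp [pow_mul]

lemma digit_sum (d n k : ℕ) :
    ∑ j ∈ Finset.range k, d ^ j * (n / d ^ j % d) = n % d ^ k := by
  induction k with
  | zero => simp [Nat.mod_one]
  | succ k ih => rw [Finset.sum_range_succ, ih, pow_succ, Nat.mod_mul]

/-- diagonal entry of the `i`-th factor -/
def gfun (d k : ℕ) (i : Fin k) (m : Fin (d * d ^ k)) : ℂ :=
  qomega (d ^ ((i : ℕ) + 2)) ^
    ((((m : ℕ) % (d ^ (i : ℕ) * (d * d ^ (k - 1 - (i : ℕ)))) % (d * d ^ (k - 1 - (i : ℕ)))) /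
        d ^ (k - 1 - (i : ℕ))) *
      ((m : ℕ) / (d ^ (i : ℕ) * (d * d ^ (k - 1 - (i : ℕ))))))

lemma main_arith (d k : ℕ) (hd : 2 ≤ d) (n : ℕ) :
    (∏ i : Fin k, qomega (d ^ ((i : ℕ) + 2)) ^
      (((n % (d ^ (i : ℕ) * (d * d ^ (k - 1 - (i : ℕ)))) % (d * d ^ (k - 1 - (i : ℕ)))) /
          d ^ (k - 1 - (i : ℕ))) *
        (n / (d ^ (i : ℕ) * (d * d ^ (k - 1 - (i : ℕ)))))))
    = qomega (d ^ (k + 1)) ^ (n % d ^ k * (n / d ^ k)) := by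
  have hd0 : 0 < d := by omega
  have hstep : ∀ i : Fin k,
      qomega (d ^ ((i : ℕ) + 2)) ^
        (((n % (d ^ (i : ℕ) * (d * d ^ (k - 1 - (i : ℕ)))) % (d * d ^ (k - 1 - (i : ℕ)))) /
            d ^ (k - 1 - (i : ℕ))) *
          (n / (d ^ (i : ℕ) * (d * d ^ (k - 1 - (i : ℕ))))))
      = qomega (d ^ (k + 1)) ^
          (d ^ (k - 1 - (i : ℕ)) * (n / d ^ (k - 1 - (i : ℕ)) % d * (n / d ^ k))) := by
    intro i
    have hik := i.isLt
    have hX : d ^ (i : ℕ) * (d * d ^ (k - 1 - (i : ℕ))) = d ^ k := by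
      rw [d_mul_pow, ← pow_add]; congr 1; omega
    have hde : d * d ^ (k - 1 - (i : ℕ)) = d ^ (k - (i : ℕ)) := by
      rw [d_mul_pow]; congr 1; omega
    have hq : qomega (d ^ (k + 1)) ^ d ^ (k - 1 - (i : ℕ)) = qomega (d ^ ((i : ℕ) + 2)) := by
      have hsp : d ^ (k + 1) = d ^ ((i : ℕ) + 2) * d ^ (k - 1 - (i : ℕ)) := by
        rw [← pow_add]; congr 1; omega
      rw [hsp, qomega_pow_eq (pow_pos hd0 _) (pow_pos hd0 _)]
    rw [hX, hde, Nat.mod_mod_of_dvd n (pow_dvd_pow d (by omega : k - (i : ℕ) ≤ k)), ← hde,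
      mul_comm d (d ^ (k - 1 - (i : ℕ))), Nat.mod_mul_right_div_self, ← hq, ← pow_mul]
  rw [Finset.prod_congr rfl (fun i _ => hstep i), Finset.prod_pow_eq_pow_sum]
  congr 1
  have hassoc : ∀ i : Fin k,
      d ^ (k - 1 - (i : ℕ)) * (n / d ^ (k - 1 - (i : ℕ)) % d * (n / d ^ k))
        = d ^ (k - 1 - (i : ℕ)) * (n / d ^ (k - 1 - (i : ℕ)) % d) * (n / d ^ k) :=
    fun i => (mul_assoc _ _ _).symm
  rw [Finset.sum_congr rfl (fun i _ => hassoc i), ← Finset.sum_mul]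
  congr 1
  rw [Fin.sum_univ_eq_sum_range (fun j => d ^ (k - 1 - j) * (n / d ^ (k - 1 - j) % d)) k,
    Finset.sum_range_reflect (fun j => d ^ j * (n / d ^ j % d)) k]
  exact digit_sum d n k

end Aux

theorem diag_factorization_radix_d (d k : ℕ) (hd : 2 ≤ d) (hk : 1 ≤ k) :
    ddsum d (d ^ k) (fun l => OmegaD d k ^ (l : ℕ)) =
      (List.map
        (fun (i : Fin k) =>
          castM ((pfd i.isLt).trans (d_mul_pow d k).symm)
            (∑ l : Fin d,
              kron (stdE l)
                (kron (1 : Matrix (Fin (d ^ (i : ℕ))) (Fin (d ^ (i : ℕ))) ℂ)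
                  (kron (RmD d ((i : ℕ) + 2) ^ (l : ℕ))
                    (1 : Matrix (Fin (d ^ (k - 1 - (i : ℕ)))) (Fin (d ^ (k - 1 - (i : ℕ)))) ℂ)))))
        (List.finRange k)).prod := by
  have hfac : ∀ i : Fin k,
      castM ((pfd i.isLt).trans (d_mul_pow d k).symm)
        (∑ l : Fin d,
          kron (stdE l)
            (kron (1 : Matrix (Fin (d ^ (i : ℕ))) (Fin (d ^ (i : ℕ))) ℂ)
              (kron (RmD d ((i : ℕ) + 2) ^ (l : ℕ))
                (1 : Matrix (Fin (d ^ (k - 1 - (i : ℕ)))) (Fin (d ^ (k - 1 - (i : ℕ)))) ℂ))))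
      = Matrix.diagonal (gfun d k i) := by
    intro i
    simp only [stdE_eq_diagonal, RmD_pow, ← Matrix.diagonal_one, kron_diagonal]
    rw [diagonal_sum_fin, castM_diagonal]
    refine congrArg Matrix.diagonal ?_
    funext m
    simp only [ite_mul, one_mul, zero_mul, mul_one, Finset.sum_ite_eq, Finset.mem_univ, if_true,
      gfun, Fin.coe_divNat, Fin.coe_modNat, Fin.coe_cast]
  rw [List.map_congr_left (fun i _ => hfac i), diagonal_list_prod (List.finRange k) (gfun d k)]
  have hL : (fun l : Fin d => OmegaD d k ^ (l : ℕ))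
      = fun l : Fin d =>
          Matrix.diagonal (fun j : Fin (d ^ k) => qomega (d ^ (k + 1)) ^ ((j : ℕ) * (l : ℕ))) :=
    funext fun l => OmegaD_pow d k l
  rw [hL, ddsum_diagonal]
  refine congrArg Matrix.diagonal ?_
  funext m
  rw [← Fin.prod_univ_def (fun a => gfun d k a m)]
  simp only [Fin.coe_divNat, Fin.coe_modNat, gfun]
  exact (main_arith d k hd (m : ℕ)).symm

end
end
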